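/- arXiv:2306.15693 — 4 statements merged into one kernel-verified Lean document; each statement's English description precedes it below -/
import Mathlib

section
/- Let k be a natural number and let D ⊆ V. If restriction to D is injective on Sol_k (i.e., the groups {G_v : v ∈ D} form a grouped independent support of the encoding F_k), then D is a generalised identifying code set (GICS) of Γ and k. -/
/-- The closed neighbourhood `N⁺[v] = {v} ∪ N(v)` of a vertex. -/
def closedNbhd {V : Type*} [Fintype V] [DecidableEq V]
    (G : SimpleGraph V) [DecidableRel G.Adj] (v : V) : Finset V :=
  insert v (G.neighborFinset v)

/-- The closed neighbourhood `N⁺[U] = ⋃_{u ∈ U} N⁺[u]` of a set of vertices. -/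
def closedNbhdSet {V : Type*} [Fintype V] [DecidableEq V]
    (G : SimpleGraph V) [DecidableRel G.Adj] (U : Finset V) : Finset V :=
  U.biUnion (closedNbhd G)

/-- The signature `σ_D(U) = (U ∩ D, N⁺[U] ∩ D)`. -/
def signature {V : Type*} [Fintype V] [DecidableEq V]
    (G : SimpleGraph V) [DecidableRel G.Adj] (D U : Finset V) : Finset V × Finset V :=
  (U ∩ D, closedNbhdSet G U ∩ D)

/-- `D` is a generalised identifying code set of `G` and `k`. -/
def IsGICS {V : Type*} [Fintype V] [DecidableEq V]
    (G : SimpleGraph V) [DecidableRel G.Adj] (k : ℕ) (D : Finset V) : Prop :=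
  ∀ U W : Finset V, U.card ≤ k → W.card ≤ k → U ≠ W →
    signature G D U ≠ signature G D W

/-- Semantic solution set of the CNF encoding `F_k`. -/
def SolSet {V : Type*} [Fintype V] [DecidableEq V]
    (G : SimpleGraph V) [DecidableRel G.Adj] (k : ℕ) : Set (V → Bool × Bool) :=
  {f | (Finset.univ.filter (fun v => (f v).1 = true)).card ≤ k ∧
       ∀ v : V, (f v).2 = true ↔ ∃ u ∈ closedNbhd G v, (f u).1 = true}

lemma mem_closedNbhd_comm {V : Type*} [Fintype V] [DecidableEq V]
    (G : SimpleGraph V) [DecidableRel G.Adj] (u v : V) :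
    u ∈ closedNbhd G v ↔ v ∈ closedNbhd G u := by
  simp only [closedNbhd, Finset.mem_insert, SimpleGraph.mem_neighborFinset]
  constructor <;> rintro (rfl | hadj) <;> simp [G.adj_symm, *]

lemma solFun_mem {V : Type*} [Fintype V] [DecidableEq V]
    (G : SimpleGraph V) [DecidableRel G.Adj] (k : ℕ) (U : Finset V)
    (hU : U.card ≤ k) :
    (fun v => ((decide (v ∈ U)), decide (v ∈ closedNbhdSet G U))) ∈ SolSet G k := by
  constructor
  · refine le_trans (le_of_eq ?_) hU
    congr 1
    ext v
    simp
  · intro v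
    simp only [decide_eq_true_eq, closedNbhdSet, Finset.mem_biUnion]
    constructor
    · rintro ⟨u, hu, hv⟩
      exact ⟨u, (mem_closedNbhd_comm G u v).mpr hv, by simpa using hu⟩
    · rintro ⟨u, hu, hu'⟩
      exact ⟨u, by simpa using hu', (mem_closedNbhd_comm G u v).mp hu⟩

theorem gis_implies_gics {V : Type*} [Fintype V] [DecidableEq V]
    (G : SimpleGraph V) [DecidableRel G.Adj] (k : ℕ) (D : Finset V)
    (h : ∀ f ∈ SolSet G k, ∀ g ∈ SolSet G k, (∀ v ∈ D, f v = g v) → f = g) :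
    IsGICS G k D := by
  intro U W hU hW hne hsig
  apply hne
  have hUW := h _ (solFun_mem G k U hU) _ (solFun_mem G k W hW) ?_
  · ext v
    have := congrFun hUW v
    simp only [Prod.mk.injEq, decide_eq_decide] at this
    exact this.1
  · intro v hv
    have h1 : (v ∈ U) = (v ∈ W) := by
      have := congrArg Prod.fst hsig
      simp only [signature] at this
      rw [eq_iff_iff]
      constructor <;> intro hx
      · have : v ∈ W ∩ D := this ▸ Finset.mem_inter.mpr ⟨hx, hv⟩
        exact (Finset.mem_inter.mp this).1
      · have : v ∈ U ∩ D := this.symm ▸ Finset.mem_inter.mpr ⟨hx, hv⟩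
        exact (Finset.mem_inter.mp this).1
    have h2 : (v ∈ closedNbhdSet G U) = (v ∈ closedNbhdSet G W) := by
      have := congrArg Prod.snd hsig
      simp only [signature] at this
      rw [eq_iff_iff]
      constructor <;> intro hx
      · have : v ∈ closedNbhdSet G W ∩ D := this ▸ Finset.mem_inter.mpr ⟨hx, hv⟩
        exact (Finset.mem_inter.mp this).1
      · have : v ∈ closedNbhdSet G U ∩ D := this.symm ▸ Finset.mem_inter.mpr ⟨hx, hv⟩
        exact (Finset.mem_inter.mp this).1
    simp [h1, h2]
end

section
/- Let k be a natural number and let D ⊆ V. If D is a generalised identifying code set (GICS) of Γ and k, then restriction to D is injective on Sol_k (i.e., the groups {G_v : v ∈ D} form a grouped independent support of the encoding F_k). -/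
theorem gics_implies_gis {V : Type*} [Fintype V] [DecidableEq V]
    (G : SimpleGraph V) [DecidableRel G.Adj] (k : ℕ) (D : Finset V)
    (h : IsGICS G k D) :
    ∀ f ∈ SolSet G k, ∀ g ∈ SolSet G k, (∀ v ∈ D, f v = g v) → f = g := by
  intro f hf g hg hfg
  obtain ⟨hfc, hfn⟩ := hf
  obtain ⟨hgc, hgn⟩ := hg
  set U : Finset V := Finset.univ.filter (fun v => (f v).1 = true) with hU
  set W : Finset V := Finset.univ.filter (fun v => (g v).1 = true) with hW
  have mem_cn : ∀ v u : V, u ∈ closedNbhd G v ↔ v ∈ closedNbhd G u := by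
    intro v u
    simp only [closedNbhd, Finset.mem_insert, SimpleGraph.mem_neighborFinset]
    constructor
    · rintro (rfl | h) ; · exact Or.inl rfl
      exact Or.inr h.symm
    · rintro (rfl | h) ; · exact Or.inl rfl
      exact Or.inr h.symm
  have key : ∀ (X : Finset V) (p : V → Bool × Bool)
      (hX : X = Finset.univ.filter (fun v => (p v).1 = true))
      (hpn : ∀ v : V, (p v).2 = true ↔ ∃ u ∈ closedNbhd G v, (p u).1 = true),
      ∀ v : V, v ∈ closedNbhdSet G X ↔ (p v).2 = true := by
    intro X p hX hpn v
    rw [hpn v]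
    simp only [closedNbhdSet, Finset.mem_biUnion, hX, Finset.mem_filter,
      Finset.mem_univ, true_and]
    constructor
    · rintro ⟨u, hu1, hu2⟩
      exact ⟨u, (mem_cn v u).mpr hu2, hu1⟩
    · rintro ⟨u, hu1, hu2⟩
      exact ⟨u, hu2, (mem_cn v u).mp hu1⟩
  have hUW : U = W := by
    by_contra hne
    apply h U W hfc hgc hne
    unfold signature
    ext x
    · simp only [Finset.mem_inter, hU, hW, Finset.mem_filter, Finset.mem_univ,
        true_and]
      constructor
      · rintro ⟨h1, h2⟩; exact ⟨by rw [← hfg x h2]; exact h1, h2⟩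
      · rintro ⟨h1, h2⟩; exact ⟨by rw [hfg x h2]; exact h1, h2⟩
    · simp only [Finset.mem_inter]
      constructor
      · rintro ⟨h1, h2⟩
        refine ⟨?_, h2⟩
        rw [key W g hW hgn x, ← hfg x h2, ← key U f hU hfn x]
        exact h1
      · rintro ⟨h1, h2⟩
        refine ⟨?_, h2⟩
        rw [key U f hU hfn x, hfg x h2, ← key W g hW hgn x]
        exact h1
  have h1 : ∀ v : V, (f v).1 = (g v).1 := by
    intro v
    have := Finset.ext_iff.mp hUW v
    simp only [hU, hW, Finset.mem_filter, Finset.mem_univ, true_and] at this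
    cases hfv : (f v).1 <;> cases hgv : (g v).1 <;> simp_all
  funext v
  have h2 : (f v).2 = (g v).2 := by
    have e1 := hfn v
    simp only [h1] at e1
    rw [← hgn v] at e1
    cases hfv : (f v).2 <;> cases hgv : (g v).2 <;> simp_all
  exact Prod.ext (h1 v) h2
end

section
/- Let B ⊆ X be an independent support of Sol, let G ⊆ B, and set C := B \ G. If every variable z ∈ G is defined by C with respect to Sol, then C is an independent support of Sol. (This is the correctness of the group-removal step of the gismo algorithm: a group all of whose variables are defined by the remaining candidate variables can be discarded while preserving an independent support.) -/
/-- `B` is an independent support of `Sol`: any two models agreeing on `B` are equal. -/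
def IsIndepSupport {X : Type*} [Fintype X] (Sol : Set (X → Bool)) (B : Set X) : Prop :=
  ∀ f ∈ Sol, ∀ g ∈ Sol, (∀ x ∈ B, f x = g x) → f = g

/-- Variable `z` is defined by the set `C` with respect to `Sol`. -/
def IsDefinedBy {X : Type*} [Fintype X] (Sol : Set (X → Bool)) (C : Set X) (z : X) : Prop :=
  ∀ f ∈ Sol, ∀ g ∈ Sol, (∀ x ∈ C, f x = g x) → f z = g z

theorem group_removal_correct {X : Type*} [Fintype X] (Sol : Set (X → Bool))
    (B G : Set X) (hGB : G ⊆ B) (hB : IsIndepSupport Sol B)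
    (hdef : ∀ z ∈ G, IsDefinedBy Sol (B \ G) z) :
    IsIndepSupport Sol (B \ G) := by
  intro f hf g hg hagree
  apply hB f hf g hg
  intro x hxB
  by_cases hxG : x ∈ G
  · exact hdef x hxG f hf g hg hagree
  · exact hagree x ⟨hxB, hxG⟩
end

section
/- Let 𝒢 be a partition of X into non-empty groups and let I ⊆ 𝒢 be such that ⋃I is an independent support of Sol. Suppose furthermore that for every group G ∈ I there exist two assignments f, g ∈ Sol with f ≠ g that agree on every variable of (⋃I) \ G. Then I is a set-minimal grouped independent support of ⟨Sol, 𝒢⟩: I is a GIS, and no proper subset I' ⊊ I is a GIS. (This is the set-minimality guarantee for the output of the gismo algorithm when no SAT call times out.) -/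
/-- Given a partition `𝒢` of the variables, `I ⊆ 𝒢` is a grouped independent support
of `⟨Sol, 𝒢⟩` if its support `⋃₀ I` is an independent support of `Sol`. -/
def IsGIS {X : Type*} [Fintype X] (Sol : Set (X → Bool)) (I : Set (Set X)) : Prop :=
  IsIndepSupport Sol (⋃₀ I)

theorem gismo_set_minimal {X : Type*} [Fintype X] (Sol : Set (X → Bool))
    (𝒢 : Set (Set X))
    (hne : ∀ G ∈ 𝒢, G.Nonempty)
    (hdisj : 𝒢.PairwiseDisjoint id)
    (hcover : ⋃₀ 𝒢 = Set.univ)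
    (I : Set (Set X)) (hI : I ⊆ 𝒢)
    (hIS : IsIndepSupport Sol (⋃₀ I))
    (hwitness : ∀ G ∈ I, ∃ f ∈ Sol, ∃ g ∈ Sol, f ≠ g ∧ ∀ x ∈ (⋃₀ I) \ G, f x = g x) :
    IsGIS Sol I ∧ ∀ I' : Set (Set X), I' ⊂ I → ¬ IsGIS Sol I' := by
  refine ⟨hIS, ?_⟩
  intro I' hsub hGIS
  obtain ⟨G, hGI, hGI'⟩ := Set.exists_of_ssubset hsub
  obtain ⟨f, hf, g, hg, hfg, hagree⟩ := hwitness G hGI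
  apply hfg
  apply hGIS f hf g hg
  intro x hx
  obtain ⟨H, hHI', hxH⟩ := hx
  apply hagree
  refine ⟨⟨H, hsub.1 hHI', hxH⟩, ?_⟩
  intro hxG
  have hHG : H ≠ G := fun h => hGI' (h ▸ hHI')
  exact (hdisj (hI (hsub.1 hHI')) (hI hGI) hHG).ne_of_mem hxH hxG rfl
end
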